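/- arXiv:1112.0599 — 6 statements merged into one kernel-verified Lean document; each statement's English description precedes it below -/
import Mathlib

section
/- If A ≤ B are submodules of a torsion-free R-module M with A relatively divisible in M, then B is relatively divisible in M if and only if B/A is relatively divisible in M/A. -/
open Cardinal

universe u v

variable {R : Type u} [CommRing R] [IsDomain R]
variable {M : Type v} [AddCommGroup M] [Module R M]

/-- `A` is a relatively divisible (RD) submodule of `M`. -/
def IsRD (A : Submodule R M) : Prop :=
  ∀ (r : R) (m : M), r • m ∈ A → ∃ a ∈ A, r • a = r • m

/-- `A` is relatively divisible within the submodule `N` of `M`. -/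
def IsRDWithin (A N : Submodule R M) : Prop :=
  A ≤ N ∧ ∀ (r : R) (m : M), m ∈ N → r • m ∈ A → ∃ a ∈ A, r • a = r • m

/-- `A` is an RD*-submodule of `M`: RD, and every finite rank submodule of `M ⧸ A`
has a countable rank preimage. -/
def IsRDStar (A : Submodule R M) : Prop :=
  IsRD A ∧ ∀ Q : Submodule R (M ⧸ A), Module.rank R ↥Q < ℵ₀ →
    ∃ C : Submodule R M, Module.rank R ↥C ≤ ℵ₀ ∧ C.map A.mkQ = Q

/-- `A` is an RD*-submodule of the submodule `N` of `M`. -/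
def IsRDStarWithin (A N : Submodule R M) : Prop :=
  IsRDWithin A N ∧ ∀ Q : Submodule R (M ⧸ A), Q ≤ N.map A.mkQ →
    Module.rank R ↥Q < ℵ₀ →
    ∃ C : Submodule R M, C ≤ N ∧ Module.rank R ↥C ≤ ℵ₀ ∧ C.map A.mkQ = Q

/-- `A` is a direct summand of `M`. -/
def IsSummand (A : Submodule R M) : Prop :=
  ∃ P : Submodule R M, A ⊓ P = ⊥ ∧ A ⊔ P = ⊤

/-- `A` is a direct summand of the submodule `N` of `M`. -/
def IsSummandWithin (A N : Submodule R M) : Prop :=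
  A ≤ N ∧ ∃ P ≤ N, A ⊓ P = ⊥ ∧ A ⊔ P = N

/-- A G*(ℵ₀)-family of RD-submodules of `M`. -/
def IsGStarFamily (𝒢 : Set (Submodule R M)) : Prop :=
  (∀ A ∈ 𝒢, IsRD A) ∧ (⊥ : Submodule R M) ∈ 𝒢 ∧ (⊤ : Submodule R M) ∈ 𝒢 ∧
  (∀ c ⊆ 𝒢, IsChain (· ≤ ·) c → c.Nonempty → sSup c ∈ 𝒢) ∧
  ∀ C ∈ 𝒢, ∀ X : Set M, X.Countable →
    ∃ B ∈ 𝒢, C ≤ B ∧ X ⊆ ↑B ∧ Module.rank R ↥(B.map C.mkQ) ≤ ℵ₀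

/-- A G*(ℵ₀)-family of RD-submodules of the submodule `N` of `M`. -/
def IsGStarFamilyWithin (𝒢 : Set (Submodule R M)) (N : Submodule R M) : Prop :=
  (∀ A ∈ 𝒢, IsRDWithin A N) ∧ (⊥ : Submodule R M) ∈ 𝒢 ∧ N ∈ 𝒢 ∧
  (∀ c ⊆ 𝒢, IsChain (· ≤ ·) c → c.Nonempty → sSup c ∈ 𝒢) ∧
  ∀ C ∈ 𝒢, ∀ X : Set M, X ⊆ ↑N → X.Countable →
    ∃ B ∈ 𝒢, C ≤ B ∧ X ⊆ ↑B ∧ Module.rank R ↥(B.map C.mkQ) ≤ ℵ₀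

/-- `A` is ultra-balanced in `M`: an RD-submodule that is a direct summand of every
RD-submodule `C` of `M` containing `A` with `C/A` of finite rank. -/
def IsUltraBalanced (A : Submodule R M) : Prop :=
  IsRD A ∧ ∀ C : Submodule R M, IsRD C → A ≤ C →
    Module.rank R ↥(C.map A.mkQ) < ℵ₀ →
    ∃ D ≤ C, A ⊓ D = ⊥ ∧ A ⊔ D = C

/-- `N` is a direct sum of submodules of countable rank. -/
def DSumCountableRank (R : Type u) [CommRing R] (N : Type v) [AddCommGroup N]
    [Module R N] : Prop :=
  ∃ (ι : Type v) (f : ι → Submodule R N), iSupIndep f ∧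
    iSup f = ⊤ ∧ ∀ i, Module.rank R ↥(f i) ≤ ℵ₀

/-- `N` is finitely decomposable: a direct sum of finite rank submodules. -/
def FinDecomp (R : Type u) [CommRing R] (N : Type v) [AddCommGroup N]
    [Module R N] : Prop :=
  ∃ (ι : Type v) (f : ι → Submodule R N), iSupIndep f ∧
    iSup f = ⊤ ∧ ∀ i, Module.rank R ↥(f i) < ℵ₀

/-- The smallest RD-submodule of `M` containing `Y`. -/
def rdClosure (Y : Set M) : Submodule R M :=
  sInf {N : Submodule R M | IsRD N ∧ Y ⊆ ↑N}

/-- With `A` RD in `M` and `A ≤ B`, `B` is RD in `M` iff `B/A` is RD in `M/A`. -/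
theorem rd_iff_quotient_rd [NoZeroSMulDivisors R M] (A B : Submodule R M)
    (hAB : A ≤ B) (hA : IsRD A) : IsRD B ↔ IsRD (B.map A.mkQ) := by
  constructor
  · intro hB r x hx
    obtain ⟨m, rfl⟩ := A.mkQ_surjective x
    obtain ⟨b, hb, hbe⟩ := hx
    have hrm : r • m ∈ B := by
      have h1 : r • m - b ∈ A := by
        rw [← Submodule.Quotient.eq]
        simpa [Submodule.Quotient.eq] using hbe.symm
      have := hAB h1
      have : (r • m - b) + b ∈ B := B.add_mem this hb
      simpa using this
    obtain ⟨a, ha, hae⟩ := hB r m hrm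
    exact ⟨A.mkQ a, ⟨a, ha, rfl⟩, by rw [← map_smul, ← map_smul, hae]⟩
  · intro hQ r m hrm
    have : r • A.mkQ m ∈ B.map A.mkQ := ⟨r • m, hrm, by simp⟩
    obtain ⟨x, hx, hxe⟩ := hQ r (A.mkQ m) this
    obtain ⟨a, ha, rfl⟩ := hx
    have h1 : r • a - r • m ∈ A := by
      rw [← Submodule.Quotient.eq]
      simpa [← map_smul] using hxe
    have h2 : r • (a - m) ∈ A := by simpa [smul_sub] using h1
    obtain ⟨c, hc, hce⟩ := hA r (a - m) h2
    refine ⟨a - c, B.sub_mem ha (hAB hc), ?_⟩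
    rw [smul_sub, hce, smul_sub]
    abel
end

section
/- RD* is transitive: if A is an RD*-submodule of B and B is an RD*-submodule of M, then A is an RD*-submodule of M. -/
open Cardinal

universe u v

variable {R : Type u} [CommRing R] [IsDomain R]
variable {M : Type v} [AddCommGroup M] [Module R M]

/-!
Relative divisibility passes directly from `B ≤ M` and `A ≤ B` to `A ≤ M`. For the lifting
property, lift the image in `M/B` of a finite rank `Q ≤ M/A` to a countable rank `C₁ ≤ M`; what
remains of `Q` modulo the image of `C₁` is a countable rank submodule of `B/A`. A countable rank
module is a countable union of finite rank submodules (saturations of spans of finite subsets of a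
maximal independent set); each of these lifts into `B` with countable rank, and a countable sum of
countable rank submodules has countable rank.
-/

section Saturation

variable {N : Type*} [AddCommGroup N] [Module R N]

def saturation (S : Submodule R N) : Submodule R N :=
  (Submodule.torsion R (N ⧸ S)).comap S.mkQ

theorem mem_saturation {S : Submodule R N} {x : N} :
    x ∈ saturation S ↔ ∃ r : R, r ≠ 0 ∧ r • x ∈ S := by
  simp [saturation, ← Submodule.Quotient.mk_smul, Submodule.Quotient.mk_eq_zero,
    mem_nonZeroDivisors_iff_ne_zero]

theorem le_saturation (S : Submodule R N) : S ≤ saturation S :=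
  fun x hx => mem_saturation.2 ⟨1, one_ne_zero, by rwa [one_smul]⟩

theorem saturation_mono {S T : Submodule R N} (h : S ≤ T) : saturation S ≤ saturation T :=
  fun _ hx => by
    obtain ⟨r, hr, hrx⟩ := mem_saturation.1 hx
    exact mem_saturation.2 ⟨r, hr, h hrx⟩

theorem rank_le_of_le_saturation {P S : Submodule R N} (h : P ≤ saturation S) :
    Module.rank R P ≤ Module.rank R S := by
  rw [Module.rank_def]
  refine ciSup_le' fun ⟨s, hs⟩ => ?_
  choose r hr hrS using fun x : s => mem_saturation.1 (h (x : P).2)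
  have hsN : LinearIndependent R fun x : s => ((x : P) : N) := hs.map' P.subtype P.ker_subtype
  -- multiplying each vector by a nonzero scalar preserves independence over a domain
  have hrsN : LinearIndependent R fun x : s => r x • ((x : P) : N) := by
    rw [linearIndependent_iff'] at hsN ⊢
    intro t g hg i hi
    refine (mul_eq_zero.1 (hsN t (fun j => g j * r j) ?_ i hi)).resolve_right (hr i)
    simpa only [mul_smul] using hg
  exact (LinearIndependent.of_comp S.subtype (v := fun x : s => (⟨_, hrS x⟩ : S))
    hrsN).cardinal_le_rank

theorem exists_card_le_rank_le_saturation_span (P : Submodule R N) :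
    ∃ I : Set N, Cardinal.mk I ≤ Module.rank R P ∧ P ≤ saturation (Submodule.span R I) := by
  obtain ⟨I, hI, hImax⟩ := exists_maximal_linearIndepOn R (P.subtype : P → N)
  refine ⟨P.subtype '' I, Cardinal.mk_image_le.trans ?_, fun x hx => ?_⟩
  · exact (LinearIndependent.of_comp P.subtype hI).cardinal_le_rank
  · by_cases hxI : ⟨x, hx⟩ ∈ I
    · exact le_saturation _ (Submodule.subset_span ⟨_, hxI, rfl⟩)
    · exact mem_saturation.2 (hImax _ hxI)

theorem rank_iSup_le_aleph0 {ι : Type*} [Countable ι] {C : ι → Submodule R N}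
    (hC : ∀ i, Module.rank R (C i) ≤ ℵ₀) : Module.rank R ↥(⨆ i, C i) ≤ ℵ₀ := by
  choose I hI hCI using fun i => exists_card_le_rank_le_saturation_span (C i)
  have hsat : ⨆ i, C i ≤ saturation (Submodule.span R (⋃ i, I i)) :=
    iSup_le fun i => (hCI i).trans (saturation_mono (Submodule.span_mono (Set.subset_iUnion I i)))
  refine (rank_le_of_le_saturation hsat).trans ((rank_span_le _).trans ?_)
  exact Cardinal.mk_le_aleph0_iff.2 (Set.countable_iUnion fun i =>
    Set.countable_coe_iff.1 (Cardinal.mk_le_aleph0_iff.1 ((hI i).trans (hC i)))).to_subtype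

theorem rank_sup_le_aleph0 {S T : Submodule R N} (hS : Module.rank R S ≤ ℵ₀)
    (hT : Module.rank R T ≤ ℵ₀) : Module.rank R ↥(S ⊔ T) ≤ ℵ₀ :=
  (Submodule.rank_add_le_rank_add_rank S T).trans ((add_le_add hS hT).trans_eq aleph0_add_aleph0)

theorem exists_iSup_eq_of_rank_le_aleph0 {Q : Submodule R N} (hQ : Module.rank R Q ≤ ℵ₀) :
    ∃ D : ℕ → Submodule R N, (∀ n, Module.rank R (D n) < ℵ₀) ∧ ⨆ n, D n = Q := by
  obtain ⟨I, hI, hQI⟩ := exists_card_le_rank_le_saturation_span Q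
  have hIc : I.Countable := Cardinal.mk_le_aleph0_iff.1 (hI.trans hQ) |> Set.countable_coe_iff.1
  obtain ⟨T, hT⟩ := (Set.countable_ofPred_finite_subset hIc).exists_eq_range
    ⟨∅, Set.finite_empty, Set.empty_subset I⟩
  have hTfin : ∀ n, (T n).Finite ∧ T n ⊆ I := fun n =>
    show T n ∈ {t : Set N | t.Finite ∧ t ⊆ I} from hT ▸ Set.mem_range_self n
  refine ⟨fun n => Q ⊓ saturation (Submodule.span R (T n)), fun n => ?_, ?_⟩
  · exact ((Submodule.rank_mono inf_le_right).trans (rank_le_of_le_saturation le_rfl)).trans_lt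
      ((rank_span_le _).trans_lt (hTfin n).1.lt_aleph0)
  refine le_antisymm (iSup_le fun n => inf_le_left) fun x hx => ?_
  obtain ⟨r, hr, hrx⟩ := mem_saturation.1 (hQI hx)
  obtain ⟨F, hFI, hxF⟩ := Submodule.mem_span_finite_of_mem_span hrx
  obtain ⟨n, hn⟩ : (F : Set N) ∈ Set.range T := hT ▸ ⟨F.finite_toSet, hFI⟩
  exact Submodule.mem_iSup_of_mem n ⟨hx, mem_saturation.2 ⟨r, hr, hn ▸ hxF⟩⟩

end Saturation

omit [IsDomain R] in
theorem IsRDWithin.isRD {A B : Submodule R M} (hA : IsRDWithin A B) (hB : IsRD B) : IsRD A := by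
  intro r m hrm
  obtain ⟨b, hb, hrb⟩ := hB r m (hA.1 hrm)
  obtain ⟨a, ha, hra⟩ := hA.2 r b hb (hrb ▸ hrm)
  exact ⟨a, ha, hra.trans hrb⟩

theorem IsRDStarWithin.exists_lift {A B : Submodule R M} (hA : IsRDStarWithin A B)
    {Q : Submodule R (M ⧸ A)} (hQB : Q ≤ B.map A.mkQ) (hQ : Module.rank R Q ≤ ℵ₀) :
    ∃ C ≤ B, Module.rank R C ≤ ℵ₀ ∧ C.map A.mkQ = Q := by
  obtain ⟨D, hD, rfl⟩ := exists_iSup_eq_of_rank_le_aleph0 hQ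
  choose C hCB hC hCD using fun n => hA.2 (D n) ((le_iSup D n).trans hQB) (hD n)
  exact ⟨⨆ n, C n, iSup_le hCB, rank_iSup_le_aleph0 hC, by simp only [Submodule.map_iSup, hCD]⟩

theorem rdStar_trans_general (A B : Submodule R M)
    (hA : IsRDStarWithin A B) (hB : IsRDStar B) : IsRDStar A := by
  refine ⟨hA.1.isRD hB.1, fun Q hQ => ?_⟩
  set f := Submodule.factor hA.1.1
  obtain ⟨C₁, hC₁, hC₁Q⟩ := hB.2 (Q.map f) ((rank_map_le f Q).trans_lt hQ)
  have hfQ : Q.map f ≤ (C₁.map A.mkQ).map f := by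
    rw [← Submodule.map_comp, Submodule.factor_comp_mk, hC₁Q]
  have hker : LinearMap.ker f = B.map A.mkQ := by
    simp [f, Submodule.ker_mapQ]
  obtain ⟨C₂, -, hC₂, hC₂Q⟩ := hA.exists_lift (Q := LinearMap.ker f ⊓ (Q ⊔ C₁.map A.mkQ))
    (hker.le.trans' inf_le_left) ((Submodule.rank_mono inf_le_right).trans
      (rank_sup_le_aleph0 hQ.le ((rank_map_le _ _).trans hC₁)))
  refine ⟨(C₁ ⊔ C₂) ⊓ Q.comap A.mkQ, (Submodule.rank_mono inf_le_left).trans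
    (rank_sup_le_aleph0 hC₁ hC₂), ?_⟩
  rw [← Submodule.map_inf_eq_map_inf_comap, inf_eq_right, Submodule.map_sup, hC₂Q,
    ← sup_inf_assoc_of_le _ le_sup_right]
  exact le_inf ((LinearMap.map_le_map_iff _).1 hfQ) le_sup_left

/-- RD* is transitive. -/
theorem rdStar_trans [NoZeroSMulDivisors R M] (A B : Submodule R M)
    (hA : IsRDStarWithin A B) (hB : IsRDStar B) : IsRDStar A :=
  rdStar_trans_general A B hA hB
end

section
/- Let R be an integral domain with field of fractions Q such that Q is not countably generated as an R-module. If 0 → H → F → Q → 0 is a free presentation of Q (F free), then H is a relatively divisible submodule of F but not an RD*-submodule of F. -/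
open Cardinal

universe u v

variable {R : Type u} [CommRing R] [IsDomain R]
variable {M : Type v} [AddCommGroup M] [Module R M]

/-! A submodule of countable rank of a free module lies in the span of countably many basis
vectors: take a maximal independent subset, which is countable, and the basis vectors in the
supports of its elements; the span of a set of basis vectors is pure, so it also contains every
element of the submodule, each of which has a nonzero multiple in the span of the independent
subset. If `ker π` were RD*, the rank one module `F ⧸ ker π ≅ Q` would be the image of such a
submodule, and `Q` would be spanned by the images of countably many basis vectors. -/

theorem isRD_ker_of_isTorsionFree {N : Type*} [AddCommGroup N] [Module R N]
    [Module.IsTorsionFree R N] (f : M →ₗ[R] N) : IsRD (LinearMap.ker f) := by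
  intro r m hrm
  rcases eq_or_ne r 0 with rfl | hr
  · exact ⟨0, zero_mem _, by simp⟩
  · refine ⟨m, ?_, rfl⟩
    rw [LinearMap.mem_ker, map_smul, smul_eq_zero] at hrm
    exact hrm.resolve_left hr

theorem rank_fractionRing : Module.rank R (FractionRing R) = 1 := by
  rw [← IsFractionRing.rank_right_eq R (FractionRing R), Module.rank_self]

theorem Module.Basis.mem_span_image_of_smul_mem {ι : Type*} (b : Basis ι R M) {s : Set ι}
    {r : R} (hr : r ≠ 0) {m : M} (h : r • m ∈ Submodule.span R (b '' s)) :
    m ∈ Submodule.span R (b '' s) := by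
  rw [b.mem_span_image] at h ⊢
  intro i hi
  apply h
  simp_all [Finsupp.mem_support_iff]

theorem Submodule.exists_countable_le_span_of_rank_le_aleph0 [Module.Free R M]
    {C : Submodule R M} (hC : Module.rank R C ≤ ℵ₀) :
    ∃ S : Set M, S.Countable ∧ C ≤ span R S := by
  classical
  obtain ⟨ι, b⟩ := Module.Free.exists_basis (R := R) (M := M)
  obtain ⟨I, hI, hImax⟩ := exists_maximal_linearIndepOn R (Subtype.val : C → M)
  have hIcount : I.Countable := by
    rw [← Set.countable_coe_iff, ← Cardinal.mk_le_aleph0_iff]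
    exact (LinearIndependent.of_comp C.subtype hI).cardinal_le_rank.trans hC
  set supp : C → Set ι := fun x => (b.repr x).support
  set T : Set ι := ⋃ x ∈ I, supp x
  refine ⟨b '' T, (hIcount.biUnion fun x _ => (b.repr x).support.countable_toSet).image b, ?_⟩
  have hI_le : span R ((Subtype.val : C → M) '' I) ≤ span R (b '' T) := by
    refine span_le.2 ?_
    rintro _ ⟨x, hx, rfl⟩
    exact b.mem_span_image.2 (Set.subset_biUnion_of_mem (u := supp) hx)
  intro c hc
  by_cases hcI : (⟨c, hc⟩ : C) ∈ I
  · exact hI_le (subset_span ⟨_, hcI, rfl⟩)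
  · obtain ⟨a, ha, hac⟩ := hImax _ hcI
    exact b.mem_span_image_of_smul_mem ha (hI_le hac)

/-- If the field of fractions `Q` of `R` is not countably generated and
`0 → H → F → Q → 0` is a free presentation of `Q`, then `H = ker π` is RD but not RD* in `F`. -/
theorem ker_rd_not_rdStar
    (hQ : ¬ ∃ S : Set (FractionRing R), S.Countable ∧
      Submodule.span R S = (⊤ : Submodule R (FractionRing R)))
    (F : Type v) [AddCommGroup F] [Module R F] [Module.Free R F]
    (π : F →ₗ[R] FractionRing R) (hπ : Function.Surjective π) :
    IsRD (LinearMap.ker π) ∧ ¬ IsRDStar (LinearMap.ker π) := by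
  refine ⟨isRD_ker_of_isTorsionFree π, fun ⟨_, hstar⟩ => hQ ?_⟩
  have hfin : Module.rank R (⊤ : Submodule R (F ⧸ LinearMap.ker π)) < ℵ₀ := by
    rw [rank_top, ← lift_lt_aleph0.{_, u}, (π.quotKerEquivOfSurjective hπ).lift_rank_eq,
      rank_fractionRing, lift_one]
    exact one_lt_aleph0
  obtain ⟨C, hCrank, hCmap⟩ := hstar ⊤ hfin
  obtain ⟨S, hS, hCS⟩ := C.exists_countable_le_span_of_rank_le_aleph0 hCrank
  have hC : C.map π = ⊤ := by
    rw [LinearMap.map_eq_top_iff (LinearMap.range_eq_top.2 hπ), sup_comm,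
      ← Submodule.map_mkQ_eq_top, hCmap]
  refine ⟨π '' S, hS.image π, ?_⟩
  rw [← Submodule.map_span, eq_top_iff, ← hC]
  exact Submodule.map_mono hCS
end

section
/- The intersection of countably many G*(ℵ₀)-families of RD-submodules of a torsion-free R-module M is again a G*(ℵ₀)-family. -/
open Cardinal

universe u v

variable {R : Type u} [CommRing R] [IsDomain R]
variable {M : Type v} [AddCommGroup M] [Module R M]

/-!
Enumerate the families so that each one occurs infinitely often, and build an increasing
sequence `B₀ ≤ B₁ ≤ ⋯` above `C` with `Bₙ` in the `n`-th family. Since `Bₙ/C` has countable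
rank, `Bₙ` is torsion over `C + ⟨Tₙ⟩` for a countable `Tₙ`; asking `Tₙ ⊆ Bₙ₊₁` forces
`Bₙ ≤ Bₙ₊₁`, because `Bₙ₊₁` is relatively divisible in a torsion-free module. The union is,
for every family, the union of a chain in that family, and it is torsion over `C + ⟨⋃ Tₙ⟩`,
so its quotient by `C` has countable rank.
-/

open Submodule Filter

section TorsionOver

variable {N : Type*} [AddCommGroup N] [Module R N]

theorem Submodule.rank_le_of_forall_exists_smul_mem {Q P : Submodule R N}
    (h : ∀ x ∈ Q, ∃ r : R, r ≠ 0 ∧ r • x ∈ P) : Module.rank R Q ≤ Module.rank R P := by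
  set P' := P.comap Q.subtype
  have htorsion : Module.rank R (Q ⧸ P') = 0 := by
    refine rank_eq_zero_iff.mpr fun x => ?_
    obtain ⟨x, rfl⟩ := Submodule.Quotient.mk_surjective P' x
    obtain ⟨r, hr, hrx⟩ := h x x.2
    exact ⟨r, hr, (Submodule.Quotient.mk_eq_zero P').mpr hrx⟩
  have hinj : Function.Injective ((Q.subtype ∘ₗ P'.subtype).codRestrict P fun x => x.2) :=
    fun x y hxy => by ext; exact congrArg (fun z : P => (z : N)) hxy
  calc Module.rank R Q = Module.rank R (Q ⧸ P') + Module.rank R P' :=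
        (rank_quotient_add_rank P').symm
    _ = Module.rank R P' := by rw [htorsion, zero_add]
    _ ≤ Module.rank R P := LinearMap.rank_le_of_injective _ hinj

theorem Submodule.exists_subset_forall_exists_smul_mem_span (Q : Submodule R N) :
    ∃ I ⊆ (Q : Set N), #I ≤ Module.rank R Q ∧
      ∀ x ∈ Q, ∃ r : R, r ≠ 0 ∧ r • x ∈ span R I := by
  obtain ⟨s, hs, hmax⟩ := exists_maximal_linearIndepOn R Q.subtype
  have hcard : #s ≤ Module.rank R Q := (LinearIndependent.of_comp Q.subtype hs).cardinal_le_rank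
  refine ⟨Q.subtype '' s, by rintro _ ⟨x, -, rfl⟩; exact x.2, mk_image_le.trans hcard,
    fun x hx => ?_⟩
  by_cases hxs : ⟨x, hx⟩ ∈ s
  · exact ⟨1, one_ne_zero, by simpa using subset_span (Set.mem_image_of_mem Q.subtype hxs)⟩
  · exact hmax _ hxs

end TorsionOver

theorem Submodule.rank_map_mkQ_le_iff {C B : Submodule R M} {κ : Cardinal.{v}} :
    Module.rank R (B.map C.mkQ) ≤ κ ↔
      ∃ T : Set M, #T ≤ κ ∧ ∀ b ∈ B, ∃ r : R, r ≠ 0 ∧ r • b ∈ C ⊔ span R T := by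
  constructor
  · intro hrank
    obtain ⟨I, -, hIcard, hI⟩ := (B.map C.mkQ).exists_subset_forall_exists_smul_mem_span
    set lift := Function.surjInv C.mkQ_surjective
    have hlift : C.mkQ '' (lift '' I) = I := by
      rw [Set.image_image]; simp [lift, Function.surjInv_eq]
    refine ⟨lift '' I, mk_image_le.trans (hIcard.trans hrank), fun b hb => ?_⟩
    obtain ⟨r, hr, hrb⟩ := hI _ (mem_map_of_mem hb)
    refine ⟨r, hr, ?_⟩
    rw [← comap_map_mkQ, mem_comap, map_span, hlift, map_smul]
    exact hrb
  · rintro ⟨T, hT, hB⟩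
    calc Module.rank R (B.map C.mkQ) ≤ Module.rank R ((span R T).map C.mkQ) := by
          refine rank_le_of_forall_exists_smul_mem ?_
          rintro _ ⟨b, hb, rfl⟩
          obtain ⟨r, hr, hrb⟩ := hB b hb
          refine ⟨r, hr, ?_⟩
          rw [← map_smul, ← mem_comap, comap_map_mkQ]
          exact hrb
      _ ≤ Module.rank R (span R T) := rank_map_le _ _
      _ ≤ #T := rank_span_le T
      _ ≤ κ := hT

theorem IsRD.le_of_forall_exists_smul_mem [NoZeroSMulDivisors R M] {A B : Submodule R M}
    (hA : IsRD A) (h : ∀ b ∈ B, ∃ r : R, r ≠ 0 ∧ r • b ∈ A) : B ≤ A := by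
  intro b hb
  obtain ⟨r, hr, hrb⟩ := h b hb
  obtain ⟨a, ha, hra⟩ := hA r b hrb
  exact smul_right_injective M hr hra ▸ ha

theorem iSup_mem_of_frequently {α : Type*} [CompleteLattice α] {𝒢 : Set α}
    (h𝒢 : ∀ c ⊆ 𝒢, IsChain (· ≤ ·) c → c.Nonempty → sSup c ∈ 𝒢) {B : ℕ → α}
    (hB : Monotone B) (hfreq : ∃ᶠ n in atTop, B n ∈ 𝒢) : ⨆ n, B n ∈ 𝒢 := by
  have hsup : sSup (B '' {n | B n ∈ 𝒢}) = ⨆ n, B n := by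
    refine le_antisymm (sSup_le_sSup (Set.image_subset_range _ _) |>.trans_eq sSup_range)
      (iSup_le fun n => ?_)
    obtain ⟨m, hnm, hm⟩ := frequently_atTop.mp hfreq n
    exact (hB hnm).trans (le_sSup ⟨m, hm, rfl⟩)
  rw [← hsup]
  exact h𝒢 _ (by rintro _ ⟨n, hn, rfl⟩; exact hn)
    (hB.isChain_range.mono (Set.image_subset_range _ _)) (Set.Nonempty.image B hfreq.exists)

theorem exists_nat_frequently_eq (ι : Type*) [Countable ι] [Nonempty ι] :
    ∃ e : ℕ → ι, ∀ i, ∃ᶠ n in atTop, e n = i := by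
  obtain ⟨f, hf⟩ := exists_surjective_nat ι
  refine ⟨fun n => f n.unpair.1, fun i => frequently_atTop.mpr fun n => ?_⟩
  obtain ⟨k, rfl⟩ := hf i
  exact ⟨Nat.pair k n, Nat.right_le_pair k n, by simp⟩

theorem IsGStarFamily.exists_countable_smul_mem_span {𝒢 : Set (Submodule R M)}
    (h𝒢 : IsGStarFamily 𝒢) {C : Submodule R M} (hC : C ∈ 𝒢) {X : Set M} (hX : X.Countable) :
    ∃ B ∈ 𝒢, C ≤ B ∧ X ⊆ B ∧
      ∃ T : Set M, T.Countable ∧ ∀ b ∈ B, ∃ r : R, r ≠ 0 ∧ r • b ∈ C ⊔ span R T := by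
  obtain ⟨B, hB, hCB, hXB, hrank⟩ := h𝒢.2.2.2.2 C hC X hX
  obtain ⟨T, hT, hBT⟩ := rank_map_mkQ_le_iff.mp hrank
  exact ⟨B, hB, hCB, hXB, T, Cardinal.le_aleph0_iff_set_countable.mp hT, hBT⟩

theorem exists_monotone_mem_of_isGStarFamily [NoZeroSMulDivisors R M]
    {𝒢 : ℕ → Set (Submodule R M)} (h𝒢 : ∀ n, IsGStarFamily (𝒢 n))
    {C : Submodule R M} (hC : ∀ n, C ∈ 𝒢 n) {X : Set M} (hX : X.Countable) :
    ∃ B : ℕ → Submodule R M, Monotone B ∧ (∀ n, B n ∈ 𝒢 n) ∧ C ≤ B 0 ∧ X ⊆ B 0 ∧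
      Module.rank R ((⨆ n, B n).map C.mkQ) ≤ ℵ₀ := by
  have step (n : ℕ) (Y : {Y : Set M // Y.Countable}) :
      ∃ (B : Submodule R M) (T : {T : Set M // T.Countable}),
        B ∈ 𝒢 n ∧ C ≤ B ∧ ↑Y ⊆ (B : Set M) ∧ ∀ b ∈ B, ∃ r : R, r ≠ 0 ∧ r • b ∈ C ⊔ span R T := by
    obtain ⟨B, hB, hCB, hYB, T, hT, hBT⟩ := (h𝒢 n).exists_countable_smul_mem_span (hC n) Y.2
    exact ⟨B, ⟨T, hT⟩, hB, hCB, hYB, hBT⟩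
  choose B T hB hCB hYB hBT using step
  -- stage `n + 1` swallows the witnesses of stage `n`, which makes the sequence increasing
  let Y : ℕ → {Y : Set M // Y.Countable} :=
    fun n => Nat.rec ⟨X, hX⟩ (fun n Yn => ⟨Yn ∪ T n Yn, Yn.2.union (T n Yn).2⟩) n
  have hmono : Monotone fun n => B n (Y n) := by
    refine monotone_nat_of_le_succ fun n => ?_
    have hspan : C ⊔ span R (T n (Y n)) ≤ B (n + 1) (Y (n + 1)) :=
      sup_le (hCB _ _) (span_le.mpr (Set.subset_union_right.trans (hYB (n + 1) (Y (n + 1)))))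
    exact ((h𝒢 (n + 1)).1 _ (hB _ _)).le_of_forall_exists_smul_mem fun b hb =>
      (hBT n _ b hb).imp fun r => And.imp_right (hspan ·)
  refine ⟨fun n => B n (Y n), hmono, fun n => hB n _, hCB 0 _, hYB 0 (Y 0), ?_⟩
  have hcount : (⋃ n, (T n (Y n) : Set M)).Countable :=
    Set.countable_iUnion fun n => (T n (Y n)).2
  refine rank_map_mkQ_le_iff.mpr
    ⟨⋃ n, T n (Y n), Cardinal.le_aleph0_iff_set_countable.mpr hcount, fun b hb => ?_⟩
  obtain ⟨n, hbn⟩ := (mem_iSup_of_directed _ hmono.directed_le).mp hb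
  have hspan : C ⊔ span R (T n (Y n)) ≤ C ⊔ span R (⋃ n, T n (Y n)) :=
    sup_le_sup_left (span_mono (Set.subset_iUnion (fun n => (T n (Y n) : Set M)) n)) C
  exact (hBT n _ b hbn).imp fun r => And.imp_right (hspan ·)

/-- The intersection of countably many G*(ℵ₀)-families is a G*(ℵ₀)-family. -/
theorem gStarFamily_iInter [NoZeroSMulDivisors R M] (ι : Type) [Countable ι] [Nonempty ι]
    (fam : ι → Set (Submodule R M)) (h : ∀ i, IsGStarFamily (fam i)) :
    IsGStarFamily (⋂ i, fam i) := by
  refine ⟨fun A hA => (h (Classical.arbitrary ι)).1 A (Set.mem_iInter.mp hA _),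
    Set.mem_iInter.mpr fun i => (h i).2.1, Set.mem_iInter.mpr fun i => (h i).2.2.1,
    fun c hc hchain hne => Set.mem_iInter.mpr fun i =>
      (h i).2.2.2.1 c (hc.trans (Set.iInter_subset _ i)) hchain hne, fun C hC X hX => ?_⟩
  obtain ⟨e, he⟩ := exists_nat_frequently_eq ι
  obtain ⟨B, hmono, hB, hCB, hXB, hrank⟩ := exists_monotone_mem_of_isGStarFamily
    (fun n => h (e n)) (fun n => Set.mem_iInter.mp hC (e n)) hX
  refine ⟨⨆ n, B n, Set.mem_iInter.mpr fun i => ?_, hCB.trans (le_iSup B 0),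
    hXB.trans (le_iSup B 0), hrank⟩
  exact iSup_mem_of_frequently (h i).2.2.2.1 hmono ((he i).mono fun n hn => hn ▸ hB n)
end

section
/- Let B be an R-module that is a direct sum of submodules of countable rank, and A ≤ B a submodule that is also a direct sum of countable rank submodules. If B' is a direct summand of B such that A ∩ B' is a direct summand of A, then A + B' is a direct sum of submodules of countable rank. -/
open Cardinal

universe u v

variable {R : Type u} [CommRing R] [IsDomain R]
variable {M : Type v} [AddCommGroup M] [Module R M]

/-! `A ⊔ B'` is the internal direct sum of `B'` and a complement `P` of `A ⊓ B'` in `A`, so it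
suffices that a direct summand `N` of a direct sum `⨁ fᵢ` of countable rank modules is again one
(Kaplansky). Partial sums `⨆ i ∈ J, f i` are summands, hence pure as everything is torsion-free,
so a countable rank submodule lies in a countable partial sum. Closing up under the projection `p`
onto `N`, every index lies in a countable set `T` whose partial sum is `p`-invariant. Well-order
the indices and filter `⨁ fᵢ` by the `p`-invariant partial sums `Kᵢ` over `⋃ j ≤ i, T j`. By
invariance, `N ⊓ K_{<i}` is a summand of `N ⊓ Kᵢ`, with a complement embedding into the countable
rank partial sum over `Tᵢ`; these complements decompose `N`. -/

section Lattice

variable {α ι κ : Type*} [CompleteLattice α]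

theorem iSupIndep.sum_elim [IsModularLattice α] {f : ι → α} {g : κ → α} (hf : iSupIndep f)
    (hg : iSupIndep g) (hfg : Disjoint (⨆ i, f i) (⨆ k, g k)) : iSupIndep (Sum.elim f g) := by
  rintro (i | k)
  · refine ((hf i).disjoint_sup_right_of_disjoint_sup_left (c := ⨆ k, g k) ?_).mono_right ?_
    · exact hfg.mono_left (sup_le (le_iSup f i) (iSup₂_le fun j _ => le_iSup f j))
    · refine iSup₂_le ?_
      rintro (j | k) hj
      · exact le_sup_of_le_left (le_iSup₂_of_le j (by simpa using hj) le_rfl)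
      · exact le_sup_of_le_right (le_iSup g k)
  · refine ((hg k).disjoint_sup_right_of_disjoint_sup_left (c := ⨆ i, f i) ?_).mono_right ?_
    · exact hfg.symm.mono_left (sup_le (le_iSup g k) (iSup₂_le fun j _ => le_iSup g j))
    · refine iSup₂_le ?_
      rintro (i | j) hj
      · exact le_sup_of_le_right (le_iSup f i)
      · exact le_sup_of_le_left (le_iSup₂_of_le j (by simpa using hj) le_rfl)

theorem iSupIndep_of_disjoint_biSup_lt [IsModularLattice α] [IsCompactlyGenerated α]
    [LinearOrder ι] {D : ι → α} (hD : ∀ i, Disjoint (D i) (⨆ j < i, D j)) :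
    iSupIndep D := by
  classical
  refine iSupIndep_iff_supIndep.mpr fun s => ?_
  induction s using Finset.induction_on_max with
  | empty => exact Finset.supIndep_empty D
  | insert i s hlt ih =>
    exact ih.insert ((hD i).mono_right (Finset.sup_le fun j hj => le_biSup D (hlt j hj)))

theorem iSup_le_iSup_of_le_biSup_lt_sup [LT ι] [WellFoundedLT ι] {S D : ι → α}
    (h : ∀ i, S i ≤ (⨆ j < i, S j) ⊔ D i) : ⨆ i, S i ≤ ⨆ i, D i := by
  refine iSup_le fun i => ?_
  induction i using WellFoundedLT.induction with
  | ind i ih => exact (h i).trans (sup_le (iSup₂_le ih) (le_iSup D i))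

theorem Monotone.inf_biSup_lt_eq [IsCompactlyGenerated α] [LinearOrder ι] {K : ι → α}
    (hK : Monotone K) (a : α) (i : ι) : a ⊓ ⨆ j < i, K j = ⨆ j < i, a ⊓ K j := by
  simp only [iSup_subtype']
  exact (hK.comp (Subtype.mono_coe _)).directed_le.inf_iSup_eq

theorem iSupIndep_and_iSup_eq_of_filtration [IsModularLattice α] [IsCompactlyGenerated α]
    [LinearOrder ι] [WellFoundedLT ι] {E D : ι → α} {N : α} (hE : ⨆ i, E i = ⊤)
    (hDN : ∀ i, D i ≤ N) (hDE : ∀ i, D i ≤ ⨆ j ≤ i, E j)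
    (hdisj : ∀ i, Disjoint (D i) (⨆ j < i, E j))
    (hspan : ∀ i, N ⊓ ⨆ j ≤ i, E j ≤ (N ⊓ ⨆ j < i, E j) ⊔ D i) :
    iSupIndep D ∧ ⨆ i, D i = N := by
  set K : ι → α := fun i => ⨆ j ≤ i, E j
  have hK : Monotone K := fun i i' h => biSup_mono fun j hj => hj.trans h
  have hK_lt : ∀ i, ⨆ j < i, K j = ⨆ j < i, E j := fun i =>
    le_antisymm
      (iSup₂_le fun j hj => iSup₂_le fun k hk => le_iSup₂_of_le k (hk.trans_lt hj) le_rfl)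
      (iSup₂_mono fun j _ => le_iSup₂_of_le j le_rfl le_rfl)
  refine ⟨iSupIndep_of_disjoint_biSup_lt fun i => (hdisj i).mono_right ?_, ?_⟩
  · exact (iSup₂_mono fun j _ => hDE j).trans (hK_lt i).le
  refine le_antisymm (iSup_le hDN) ?_
  calc N = ⨆ i, N ⊓ K i := by
        have hKtop : ⨆ i, K i = ⊤ :=
          eq_top_iff.mpr (hE ▸ iSup_mono fun i => le_iSup₂_of_le i le_rfl le_rfl)
        rw [← hK.directed_le.inf_iSup_eq, hKtop, inf_top_eq]
    _ ≤ ⨆ i, D i := iSup_le_iSup_of_le_biSup_lt_sup fun i =>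
        (hspan i).trans (sup_le_sup_right (by rw [← hK_lt, hK.inf_biSup_lt_eq]) _)

end Lattice

theorem Set.exists_countable_superset_forall_subset {ι : Type*} (σ : ι → Set ι)
    (hσ : ∀ i, (σ i).Countable) {S : Set ι} (hS : S.Countable) :
    ∃ T, S ⊆ T ∧ T.Countable ∧ ∀ i ∈ T, σ i ⊆ T := by
  let step : Set ι → Set ι := fun U => U ∪ ⋃ i ∈ U, σ i
  refine ⟨⋃ n : ℕ, step^[n] S, subset_iUnion (fun n => step^[n] S) 0,
    countable_iUnion fun n => ?_, fun i hi j hj => ?_⟩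
  · induction n with
    | zero => exact hS
    | succ n ih =>
      rw [Function.iterate_succ_apply']
      exact ih.union (ih.biUnion fun i _ => hσ i)
  · obtain ⟨n, hn⟩ := mem_iUnion.mp hi
    refine mem_iUnion.mpr ⟨n + 1, ?_⟩
    rw [Function.iterate_succ_apply']
    exact Or.inr (mem_biUnion hn hj)

section Module

variable {R M M₂ ι : Type*} [Ring R] [AddCommGroup M] [Module R M] [AddCommGroup M₂]
  [Module R M₂]

theorem iSupIndep.map_of_injective {p : ι → Submodule R M} (hp : iSupIndep p)
    {f : M →ₗ[R] M₂} (hf : Function.Injective f) : iSupIndep fun i => (p i).map f :=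
  fun i => by simpa only [Submodule.map_iSup] using Submodule.disjoint_map hf (hp i)

theorem Submodule.rank_le_of_le_sup_of_disjoint {C D E : Submodule R M} (hD : D ≤ C ⊔ E)
    (hDC : Disjoint D C) : Module.rank R D ≤ Module.rank R E := by
  have hinj : Function.Injective (C.mkQ ∘ₗ D.subtype) := by
    rw [← LinearMap.ker_eq_bot, LinearMap.ker_comp, ker_mkQ, ← disjoint_iff_comap_eq_bot]
    exact hDC
  calc Module.rank R D = Module.rank R (D.map C.mkQ) := by
        rw [← rank_range_of_injective _ hinj, LinearMap.range_comp, range_subtype]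
    _ ≤ Module.rank R (E.map C.mkQ) := by
        refine rank_mono ((map_mono hD).trans ?_)
        rw [map_sup, mkQ_map_self, bot_sup_eq]
    _ ≤ Module.rank R E := rank_map_le _ _

theorem Submodule.mem_of_smul_mem_of_isCompl [NoZeroSMulDivisors R M] {P Q : Submodule R M}
    (h : IsCompl P Q) {a : R} (ha : a ≠ 0) {y : M} (hy : a • y ∈ P) : y ∈ P := by
  rw [← projection_apply_eq_zero_iff h.symm] at hy ⊢
  rw [map_smul] at hy
  exact (eq_zero_or_eq_zero_of_smul_eq_zero hy).resolve_left ha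

theorem LinearMap.IsProj.exists_le_sup_of_map_le {N C C' K : Submodule R M} {p : M →ₗ[R] M}
    (hp : IsProj N p) (hC : IsCompl C C') (hpC : C.map p ≤ C) (hCK : C ≤ K) :
    ∃ D ≤ N ⊓ K, Disjoint D C ∧ N ⊓ K ≤ (N ⊓ C) ⊔ D := by
  set π := p ∘ₗ C.projection C' hC
  have hπ : IsProj (N ⊓ C) π :=
    ⟨fun x => ⟨hp.map_mem _, hpC (Submodule.mem_map_of_mem (C.projection_apply_mem hC x))⟩,
      fun x hx => by simp [π, C.projection_apply_of_mem_left hC hx.2, hp.map_id x hx.1]⟩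
  refine ⟨ker π ⊓ (N ⊓ K), inf_le_right, disjoint_iff_inf_le.mpr ?_, ?_⟩
  · refine le_trans (le_inf (inf_le_left.trans inf_le_left) ?_) hπ.isCompl.symm.disjoint.le_bot
    exact le_inf (inf_le_left.trans (inf_le_right.trans inf_le_left)) inf_le_right
  · rw [← sup_inf_assoc_of_le _ (inf_le_inf_left N hCK), hπ.isCompl.sup_eq_top, top_inf_eq]

theorem Submodule.rank_le_aleph0_of_subset_iUnion [Nontrivial R] {κ : Type*} [Countable κ]
    {P : Submodule R M} (X : κ → Submodule R M) (hX : ∀ k, Module.rank R (X k) ≤ ℵ₀)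
    (hP : (P : Set M) ⊆ ⋃ k, (X k : Set M)) : Module.rank R P ≤ ℵ₀ := by
  rw [Module.rank_def]
  refine ciSup_le' fun ⟨s, hs⟩ => ?_
  have hsM : LinearIndependent R fun x : s => ((x : P) : M) := hs.map' P.subtype P.ker_subtype
  choose k hk using fun x : s => Set.mem_iUnion.mp (hP (x : P).2)
  have hfib : ∀ k₀, Countable {x : s // k x = k₀} := fun k₀ => by
    have hind : LinearIndependent R fun x : {x : s // k x = k₀} =>
        (⟨((x : s) : P), by simpa only [x.2, SetLike.mem_coe] using hk x.1⟩ : X k₀) :=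
      .of_comp (X k₀).subtype (hsM.comp _ Subtype.val_injective)
    exact Cardinal.mk_le_aleph0_iff.mp (hind.cardinal_le_rank.trans (hX k₀))
  have : Countable s := .of_equiv _ (Equiv.sigmaFiberEquiv k)
  exact Cardinal.mk_le_aleph0

variable {f : ι → Submodule R M}

theorem iSupIndep.isCompl_biSup_biSup_compl (hind : iSupIndep f) (hsup : ⨆ i, f i = ⊤)
    (J : Set ι) : IsCompl (⨆ i ∈ J, f i) (⨆ i ∈ Jᶜ, f i) :=
  ⟨hind.disjoint_biSup_biSup disjoint_compl_right,
    codisjoint_iff.mpr (by rw [← iSup_union, Set.union_compl_self, iSup_univ, hsup])⟩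

theorem iSupIndep.exists_countable_le_biSup [Nontrivial R] [NoZeroSMulDivisors R M]
    (hind : iSupIndep f) (hsup : ⨆ i, f i = ⊤) {X : Submodule R M}
    (hX : Module.rank R X ≤ ℵ₀) : ∃ s : Set ι, s.Countable ∧ X ≤ ⨆ i ∈ s, f i := by
  obtain ⟨I, hI, hmax⟩ := exists_maximal_linearIndepOn R X.subtype
  have hIc : I.Countable := Set.countable_coe_iff.mp <| Cardinal.mk_le_aleph0_iff.mp <|
    (LinearIndependent.of_comp X.subtype hI).cardinal_le_rank.trans hX
  choose F hF using fun x : M =>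
    Submodule.mem_iSup_iff_exists_finset.mp (hsup ▸ Submodule.mem_top : x ∈ ⨆ i, f i)
  set s := ⋃ x ∈ I, (F x : Set ι)
  have hspan : Submodule.span R (X.subtype '' I) ≤ ⨆ i ∈ s, f i := by
    rw [Submodule.span_le]
    rintro _ ⟨x, hx, rfl⟩
    exact biSup_mono (f := f) (fun i hi => Set.mem_biUnion hx hi) (hF x)
  refine ⟨s, hIc.biUnion fun x _ => (F x).countable_toSet, fun x hx => ?_⟩
  by_cases hxI : ⟨x, hx⟩ ∈ I
  · exact hspan (Submodule.subset_span ⟨_, hxI, rfl⟩)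
  · obtain ⟨a, ha, hax⟩ := hmax _ hxI
    exact Submodule.mem_of_smul_mem_of_isCompl (hind.isCompl_biSup_biSup_compl hsup s) ha
      (hspan hax)

theorem iSupIndep.exists_countable_mem_map_biSup_le [Nontrivial R] [NoZeroSMulDivisors R M]
    (hind : iSupIndep f) (hsup : ⨆ i, f i = ⊤) (hrank : ∀ i, Module.rank R (f i) ≤ ℵ₀)
    (p : M →ₗ[R] M) (j : ι) :
    ∃ T : Set ι, T.Countable ∧ j ∈ T ∧ (⨆ i ∈ T, f i).map p ≤ ⨆ i ∈ T, f i := by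
  choose σ hσc hσ using fun i =>
    hind.exists_countable_le_biSup hsup ((rank_map_le p (f i)).trans (hrank i))
  obtain ⟨T, hjT, hTc, hT⟩ :=
    Set.exists_countable_superset_forall_subset σ hσc (Set.countable_singleton j)
  refine ⟨T, hTc, hjT rfl, ?_⟩
  simp only [Submodule.map_iSup]
  exact iSup₂_le fun i hi => (hσ i).trans (biSup_mono (hT i hi))

end Module

section RankNullity

variable {R : Type*} {M : Type v} [Ring R] [HasRankNullity.{v} R] [AddCommGroup M] [Module R M]

theorem Submodule.rank_iSup_le_aleph0 {κ : Type*} [Countable κ] (g : κ → Submodule R M)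
    (hg : ∀ k, Module.rank R (g k) ≤ ℵ₀) : Module.rank R ↥(⨆ k, g k) ≤ ℵ₀ := by
  classical
  have := nontrivial_of_hasRankNullity R
  have hfin : ∀ s : Finset κ, Module.rank R ↥(⨆ k ∈ s, g k) ≤ ℵ₀ := fun s => by
    induction s using Finset.induction_on with
    | empty => rw [show (⨆ k ∈ (∅ : Finset κ), g k) = ⊥ by simp, rank_bot]; exact zero_le
    | insert k s _ ih =>
      rw [Finset.iSup_insert]
      exact (rank_add_le_rank_add_rank _ _).trans (Cardinal.add_le_aleph0.mpr ⟨hg k, ih⟩)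
  refine rank_le_aleph0_of_subset_iUnion (fun s : Finset κ => ⨆ k ∈ s, g k) hfin fun x hx => ?_
  exact Set.mem_iUnion.mpr (mem_iSup_iff_exists_finset.mp hx)

theorem Submodule.rank_biSup_le_aleph0 {ι : Type*} (f : ι → Submodule R M) {s : Set ι}
    (hs : s.Countable) (hf : ∀ i ∈ s, Module.rank R (f i) ≤ ℵ₀) :
    Module.rank R ↥(⨆ i ∈ s, f i) ≤ ℵ₀ := by
  have := hs.to_subtype
  rw [iSup_subtype']
  exact rank_iSup_le_aleph0 _ fun i => hf i i.2

end RankNullity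

section Decompositions

variable {R : Type*} {M M₂ : Type v} [CommRing R] [AddCommGroup M] [Module R M]
  [AddCommGroup M₂] [Module R M₂]

theorem DSumCountableRank.of_linearEquiv (h : DSumCountableRank R M) (e : M ≃ₗ[R] M₂) :
    DSumCountableRank R M₂ := by
  obtain ⟨ι, f, hind, hsup, hrank⟩ := h
  refine ⟨ι, fun i => (f i).map (e : M →ₗ[R] M₂), hind.map_of_injective e.injective, ?_,
    fun i => (rank_map_eq e.injective (f i)).le.trans (hrank i)⟩
  rw [← Submodule.map_iSup, hsup, Submodule.map_top, LinearEquiv.range]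

theorem Submodule.dSumCountableRank_iff {N : Submodule R M} :
    DSumCountableRank R N ↔ ∃ (ι : Type v) (D : ι → Submodule R M),
      iSupIndep D ∧ ⨆ i, D i = N ∧ ∀ i, Module.rank R (D i) ≤ ℵ₀ := by
  constructor
  · rintro ⟨ι, g, hind, hsup, hrank⟩
    refine ⟨ι, fun i => (g i).map N.subtype, hind.map_of_injective N.injective_subtype, ?_,
      fun i => (rank_map_eq N.injective_subtype (g i)).le.trans (hrank i)⟩
    rw [← map_iSup, hsup, map_top, range_subtype]
  · rintro ⟨ι, D, hind, hsup, hrank⟩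
    have hle : ∀ i, D i ≤ N := fun i => hsup ▸ le_iSup D i
    refine ⟨ι, fun i => (D i).comap N.subtype, ?_, ?_,
      fun i => (comapSubtypeEquivOfLe (hle i)).rank_eq.le.trans (hrank i)⟩
    · exact (iSupIndep.of_coe_Iic_comp (t := fun i => ⟨D i, hle i⟩) hind).map_orderIso
        N.mapIic.symm
    · refine map_injective_of_injective N.injective_subtype ?_
      simp only [map_iSup, map_comap_subtype, inf_eq_right.mpr (hle _), hsup, map_top,
        range_subtype]

theorem DSumCountableRank.sup_of_disjoint {X Y : Submodule R M} (hXY : Disjoint X Y)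
    (hX : DSumCountableRank R X) (hY : DSumCountableRank R Y) :
    DSumCountableRank R ↥(X ⊔ Y) := by
  obtain ⟨ι, D, hD, rfl, hDr⟩ := Submodule.dSumCountableRank_iff.mp hX
  obtain ⟨κ, E, hE, rfl, hEr⟩ := Submodule.dSumCountableRank_iff.mp hY
  refine Submodule.dSumCountableRank_iff.mpr
    ⟨ι ⊕ κ, Sum.elim D E, hD.sum_elim hE hXY, iSup_sum, Sum.forall.mpr ⟨hDr, hEr⟩⟩

theorem Submodule.isCompl_comap_subtype_of_inf_eq_bot {p q r : Submodule R M} (hqr : q ⊓ r = ⊥)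
    (hsup : q ⊔ r = p) : IsCompl (q.comap p.subtype) (r.comap p.subtype) := by
  rw [p.mapIic.isCompl_iff, Set.Iic.isCompl_iff]
  simp [disjoint_iff, ← hsup, hqr]

end Decompositions

theorem DSumCountableRank.of_isCompl [NoZeroSMulDivisors R M] (hM : DSumCountableRank R M)
    {N N' : Submodule R M} (h : IsCompl N N') : DSumCountableRank R N := by
  obtain ⟨ι, f, hind, hsup, hrank⟩ := hM
  obtain ⟨_, _⟩ := exists_wellFoundedLT ι
  set p := N.projection N' h
  have hp : LinearMap.IsProj N p :=
    ⟨N.projection_apply_mem h, fun _ => N.projection_apply_of_mem_left h⟩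
  choose T hTc hjT hTp using hind.exists_countable_mem_map_biSup_le hsup hrank p
  set E : ι → Submodule R M := fun j => ⨆ k ∈ T j, f k
  have hE_lt : ∀ i, ⨆ j < i, E j = ⨆ k ∈ ⋃ j < i, T j, f k := fun i => by
    simp only [E, iSup_iUnion]
  have hstep : ∀ i, ∃ D ≤ N ⊓ ⨆ j ≤ i, E j, Disjoint D (⨆ j < i, E j) ∧
      N ⊓ ⨆ j ≤ i, E j ≤ (N ⊓ ⨆ j < i, E j) ⊔ D := fun i =>
    hp.exists_le_sup_of_map_le (by rw [hE_lt]; exact hind.isCompl_biSup_biSup_compl hsup _)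
      (Submodule.map_le_iff_le_comap.mpr <| iSup₂_le fun j hj =>
        Submodule.map_le_iff_le_comap.mp ((hTp j).trans (le_iSup₂_of_le j hj le_rfl)))
      (biSup_mono fun _ => le_of_lt)
  choose D hD hdisj hspan using hstep
  have hE : ⨆ i, E i = ⊤ := eq_top_iff.mpr (hsup ▸ iSup_mono fun i => le_biSup f (hjT i))
  obtain ⟨hDind, hDsup⟩ := iSupIndep_and_iSup_eq_of_filtration hE
    (fun i => (hD i).trans inf_le_left) (fun i => (hD i).trans inf_le_right) hdisj hspan
  refine Submodule.dSumCountableRank_iff.mpr ⟨ι, D, hDind, hDsup, fun i => ?_⟩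
  calc Module.rank R (D i) ≤ Module.rank R (E i) :=
        Submodule.rank_le_of_le_sup_of_disjoint
          ((hD i).trans (inf_le_right.trans (biSup_le_eq_sup (f := E) (i := i)).le)) (hdisj i)
    _ ≤ ℵ₀ := Submodule.rank_biSup_le_aleph0 f (hTc i) fun k _ => hrank k

/-- If `B` and `A ≤ B` are direct sums of countable rank submodules, `B'` is a
summand of `B` and `A ⊓ B'` is a summand of `A`, then `A + B'` is a direct sum of countable
rank submodules. -/
theorem sum_dSumCountableRank {B : Type v} [AddCommGroup B] [Module R B]
    [NoZeroSMulDivisors R B] (A B' : Submodule R B)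
    (hB : DSumCountableRank R B) (hA : DSumCountableRank R ↥A)
    (hB' : IsSummand B') (hAB' : IsSummandWithin (A ⊓ B') A) :
    DSumCountableRank R ↥(A ⊔ B') := by
  obtain ⟨Q, hB'Q, hB'Q'⟩ := hB'
  obtain ⟨-, P, hPA, hinf, hsupP⟩ := hAB'
  have : NoZeroSMulDivisors R A :=
    Function.Injective.noZeroSMulDivisors _ A.injective_subtype rfl fun _ _ => rfl
  have hB'd : DSumCountableRank R B' :=
    hB.of_isCompl ⟨disjoint_iff.mpr hB'Q, codisjoint_iff.mpr hB'Q'⟩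
  have hPd : DSumCountableRank R P :=
    (hA.of_isCompl (Submodule.isCompl_comap_subtype_of_inf_eq_bot hinf hsupP).symm).of_linearEquiv
      (Submodule.comapSubtypeEquivOfLe hPA)
  have hPB' : Disjoint P B' := by
    rw [disjoint_iff, ← inf_eq_left.mpr hPA, inf_assoc, inf_comm, hinf]
  have hsup : P ⊔ B' = A ⊔ B' := by
    rw [← hsupP, sup_comm (A ⊓ B'), sup_assoc,
      sup_eq_right.mpr (inf_le_right : A ⊓ B' ≤ B')]
  exact hsup ▸ hPd.sup_of_disjoint hPB' hB'd
end

section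
/- Let M be a torsion-free R-module of countable rank that is the union of an ascending chain 0 = M_0 ≤ M_1 ≤ ... (indexed by ℕ) where each M_n is a direct sum of finite rank submodules and each M_n is relatively divisible in M_{n+1}. Suppose that for every finite subset S of M there exist an index n and a finite rank submodule C of M containing S such that C is a direct summand of M_m for all m ≥ n. Then M is a direct sum of finite rank submodules. -/
open Cardinal

universe u v

variable {R : Type u} [CommRing R] [IsDomain R]
variable {M : Type v} [AddCommGroup M] [Module R M]

/-!
Enumerate a maximal independent family `x₀, x₁, …` of the countable rank module `M`.
Condition (*) yields an increasing chain `C₀ ≤ C₁ ≤ ⋯` of finite rank submodules with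
`xₖ ∈ Cₖ`, each a direct summand of `Mseq m` for all large `m`: apply (*) to `xₖ` together
with a finite set spanning `Cₖ₋₁` up to torsion. Summands of the `Mseq m` are pure in `M`, so
the new submodule contains `Cₖ₋₁`, and the union of the chain is `M`. As `Cₖ ≤ Cₖ₊₁` are
summands of a common `Mseq m`, each `Cₖ` is a summand of `Cₖ₊₁`, and the successive
complements decompose `M` into finite rank pieces.
-/

open Filter

theorem iSupIndep_of_disjoint_partialSups {α : Type*} [CompleteLattice α] [IsModularLattice α]
    [IsCompactlyGenerated α] {f : ℕ → α} (h : ∀ n, Disjoint (f (n + 1)) (partialSups f n)) :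
    iSupIndep f := by
  have hrange : ∀ n, (Finset.range n).SupIndep f := by
    intro n
    induction n with
    | zero => exact Finset.supIndep_empty f
    | succ n ih =>
      rw [Finset.range_add_one]
      refine ih.insert ?_
      cases n with
      | zero => simp
      | succ n => simpa [partialSups_eq_sup_range] using h n
  refine iSupIndep_iff_supIndep.2 fun s => ?_
  obtain ⟨n, hn⟩ := s.exists_nat_subset_range
  exact (hrange n).subset hn

theorem exists_iSupIndep_of_complemented_succ {α : Type*} [CompleteLattice α] [IsModularLattice α]
    [IsCompactlyGenerated α] {g : ℕ → α} (h : ∀ n, ∃ d, g n ⊓ d = ⊥ ∧ g n ⊔ d = g (n + 1)) :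
    ∃ f : ℕ → α, iSupIndep f ∧ (∀ n, f n ≤ g n) ∧ ⨆ n, f n = ⨆ n, g n := by
  choose d hd using h
  let f : ℕ → α := fun n => Nat.casesOn n (g 0) d
  have hpartial : ⇑(partialSups f) = g := by
    funext n
    induction n with
    | zero => rfl
    | succ n ih => rw [partialSups_add_one, ih]; exact (hd n).2
  refine ⟨f, iSupIndep_of_disjoint_partialSups fun n => ?_, fun n => ?_, ?_⟩
  · rw [hpartial, disjoint_iff, inf_comm]
    exact (hd n).1
  · exact hpartial ▸ le_partialSups f n
  · rw [← iSup_partialSups_eq, hpartial]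

section

variable {R M : Type*} [CommRing R] [AddCommGroup M] [Module R M]

theorem IsSummandWithin.mem_of_smul_mem [NoZeroSMulDivisors R M] {C N : Submodule R M}
    (h : IsSummandWithin C N) {r : R} (hr : r ≠ 0) {x : M} (hx : x ∈ N) (hrx : r • x ∈ C) :
    x ∈ C := by
  obtain ⟨-, P, -, hCP, hCPN⟩ := h
  obtain ⟨c, hc, p, hp, rfl⟩ := Submodule.mem_sup.1 (hCPN ▸ hx)
  have hrp : r • p ∈ C ⊓ P := by
    refine ⟨?_, P.smul_mem r hp⟩
    simpa [smul_add] using C.sub_mem hrx (C.smul_mem r hc)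
  rw [hCP, Submodule.mem_bot] at hrp
  simpa [(eq_zero_or_eq_zero_of_smul_eq_zero hrp).resolve_left hr] using hc

theorem IsSummandWithin.of_le {C D N : Submodule R M} (h : IsSummandWithin C N) (hCD : C ≤ D)
    (hDN : D ≤ N) : IsSummandWithin C D := by
  obtain ⟨-, P, -, hCP, hCPN⟩ := h
  refine ⟨hCD, P ⊓ D, inf_le_right, ?_, ?_⟩
  · rw [← inf_assoc, hCP, bot_inf_eq]
  · rw [← sup_inf_assoc_of_le P hCD, hCPN, inf_eq_right.2 hDN]

theorem Submodule.exists_set_mk_le_rank_smul_mem_span [Nontrivial R] (C : Submodule R M) :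
    ∃ I : Set M, I ⊆ C ∧ #I ≤ Module.rank R C ∧
      ∀ c ∈ C, ∃ r : R, r ≠ 0 ∧ r • c ∈ Submodule.span R I := by
  obtain ⟨J, hJ, hJmax⟩ := exists_maximal_linearIndepOn R C.subtype
  refine ⟨C.subtype '' J, Set.image_subset_iff.2 fun c _ => c.2, ?_, fun c hc => ?_⟩
  · exact Cardinal.mk_image_le.trans
      (LinearIndepOn.of_comp C.subtype hJ).linearIndependent.cardinal_le_rank
  · by_cases hcJ : (⟨c, hc⟩ : C) ∈ J
    · exact ⟨1, one_ne_zero, by simpa using Submodule.subset_span (Set.mem_image_of_mem _ hcJ)⟩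
    · exact hJmax _ hcJ

theorem FinDecomp.of_iSupIndep {ι : Type} (f : ι → Submodule R M) (hf : iSupIndep f)
    (htop : iSup f = ⊤) (hrank : ∀ i, Module.rank R (f i) < ℵ₀) : FinDecomp R M :=
  ⟨ULift ι, fun i => f i.down, hf.comp ULift.down_injective, by rw [iSup_ulift, htop],
    fun i => hrank i.down⟩

theorem exists_seq_smul_mem_span_range [Nontrivial R] (hM : Module.rank R M ≤ ℵ₀) :
    ∃ x : ℕ → M, ∀ m, ∃ r : R, r ≠ 0 ∧ r • m ∈ Submodule.span R (Set.range x) := by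
  obtain ⟨I, -, hIrank, hI⟩ := (⊤ : Submodule R M).exists_set_mk_le_rank_smul_mem_span
  rw [rank_top] at hIrank
  obtain ⟨x, hx⟩ := Set.countable_iff_exists_subset_range.1
    (le_aleph0_iff_set_countable.1 (hIrank.trans hM))
  exact ⟨x, fun m => (hI m trivial).imp fun r ⟨hr, hrm⟩ => ⟨hr, Submodule.span_mono hx hrm⟩⟩

variable {Mseq : ℕ → Submodule R M}

theorem mem_of_smul_mem_of_eventually_isSummandWithin [NoZeroSMulDivisors R M]
    (hmono : Monotone Mseq) (hunion : ⨆ n, Mseq n = ⊤) {C : Submodule R M}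
    (hC : ∀ᶠ m in atTop, IsSummandWithin C (Mseq m)) {r : R} (hr : r ≠ 0) {x : M}
    (hrx : r • x ∈ C) : x ∈ C := by
  obtain ⟨n, hn⟩ := (Submodule.mem_iSup_of_chain ⟨Mseq, hmono⟩ x).1 (hunion ▸ Submodule.mem_top)
  obtain ⟨m, hCm, hnm⟩ := (hC.and (eventually_ge_atTop n)).exists
  exact hCm.mem_of_smul_mem hr (hmono hnm hn) hrx

theorem exists_eventually_isSummandWithin_ge [NoZeroSMulDivisors R M] [Nontrivial R]
    (hmono : Monotone Mseq) (hunion : ⨆ n, Mseq n = ⊤)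
    (hstar : ∀ S : Finset M, ∃ C : Submodule R M, ↑S ⊆ (C : Set M) ∧
      Module.rank R C < ℵ₀ ∧ ∀ᶠ m in atTop, IsSummandWithin C (Mseq m))
    {C : Submodule R M} (hC : Module.rank R C < ℵ₀) (z : M) :
    ∃ C' : Submodule R M, Module.rank R C' < ℵ₀ ∧
      (∀ᶠ m in atTop, IsSummandWithin C' (Mseq m)) ∧ C ≤ C' ∧ z ∈ C' := by
  classical
  obtain ⟨I, -, hIrank, hI⟩ := C.exists_set_mk_le_rank_smul_mem_span
  have hIfin : I.Finite := lt_aleph0_iff_set_finite.1 (hIrank.trans_lt hC)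
  obtain ⟨C', hsub, hrank, hsumm⟩ := hstar (insert z hIfin.toFinset)
  refine ⟨C', hrank, hsumm, fun c hc => ?_, hsub (by simp)⟩
  obtain ⟨r, hr, hrc⟩ := hI c hc
  have hIC' : Submodule.span R I ≤ C' := Submodule.span_le.2 fun y hy => hsub (by simp [hy])
  exact mem_of_smul_mem_of_eventually_isSummandWithin hmono hunion hsumm hr (hIC' hrc)

theorem exists_monotone_eventually_isSummandWithin [NoZeroSMulDivisors R M] [Nontrivial R]
    (hmono : Monotone Mseq) (hunion : ⨆ n, Mseq n = ⊤)
    (hstar : ∀ S : Finset M, ∃ C : Submodule R M, ↑S ⊆ (C : Set M) ∧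
      Module.rank R C < ℵ₀ ∧ ∀ᶠ m in atTop, IsSummandWithin C (Mseq m))
    (x : ℕ → M) :
    ∃ g : ℕ → Submodule R M, Monotone g ∧ (∀ k, Module.rank R (g k) < ℵ₀ ∧
      ∀ᶠ m in atTop, IsSummandWithin (g k) (Mseq m)) ∧ ∀ k, x k ∈ g k := by
  choose! F hF using fun (C : Submodule R M) (hC : Module.rank R C < ℵ₀) (z : M) =>
    exists_eventually_isSummandWithin_ge hmono hunion hstar hC z
  -- `G (k + 1) = F (G k) (x k)`; the subtype carries the finite rank that `hF` needs.
  let G : ℕ → {C : Submodule R M // Module.rank R C < ℵ₀} := fun k =>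
    Nat.rec ⟨⊥, by simp [aleph0_pos]⟩ (fun k C => ⟨F C (x k), (hF C C.2 (x k)).1⟩) k
  exact ⟨fun k => G (k + 1), monotone_nat_of_le_succ fun k => (hF _ (G (k + 1)).2 _).2.2.1,
    fun k => ⟨(G (k + 1)).2, (hF _ (G k).2 _).2.1⟩, fun k => (hF _ (G k).2 _).2.2.2⟩

theorem iSup_eq_top_of_eventually_isSummandWithin [NoZeroSMulDivisors R M]
    (hmono : Monotone Mseq) (hunion : ⨆ n, Mseq n = ⊤) {g : ℕ → Submodule R M}
    (hg_mono : Monotone g) (hg : ∀ k, ∀ᶠ m in atTop, IsSummandWithin (g k) (Mseq m))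
    {x : ℕ → M} (hx : ∀ m, ∃ r : R, r ≠ 0 ∧ r • m ∈ Submodule.span R (Set.range x))
    (hxg : ∀ k, x k ∈ g k) : ⨆ k, g k = ⊤ := by
  refine eq_top_iff.2 fun m _ => ?_
  obtain ⟨r, hr, hrm⟩ := hx m
  have hspan : Submodule.span R (Set.range x) ≤ ⨆ k, g k :=
    Submodule.span_le.2 (Set.range_subset_iff.2 fun k => le_iSup g k (hxg k))
  obtain ⟨j, hj⟩ := (Submodule.mem_iSup_of_chain ⟨g, hg_mono⟩ _).1 (hspan hrm)
  exact (Submodule.mem_iSup_of_chain ⟨g, hg_mono⟩ m).2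
    ⟨j, mem_of_smul_mem_of_eventually_isSummandWithin hmono hunion (hg j) hr hj⟩

end

theorem finDecomp_of_chain_general [NoZeroSMulDivisors R M] (hMrank : Module.rank R M ≤ ℵ₀)
    (Mseq : ℕ → Submodule R M) (hmono : Monotone Mseq)
    (hunion : ⨆ n, Mseq n = ⊤)
    (hstar : ∀ S : Finset M, ∃ (n : ℕ) (C : Submodule R M),
      ↑S ⊆ (C : Set M) ∧ Module.rank R ↥C < ℵ₀ ∧
      ∀ m, n ≤ m → IsSummandWithin C (Mseq m)) :
    FinDecomp R M := by
  have hstar' : ∀ S : Finset M, ∃ C : Submodule R M, ↑S ⊆ (C : Set M) ∧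
      Module.rank R C < ℵ₀ ∧ ∀ᶠ m in atTop, IsSummandWithin C (Mseq m) := fun S =>
    let ⟨n, C, hS, hC, hsumm⟩ := hstar S
    ⟨C, hS, hC, eventually_atTop.2 ⟨n, hsumm⟩⟩
  obtain ⟨x, hx⟩ := exists_seq_smul_mem_span_range hMrank
  obtain ⟨g, hg_mono, hg, hxg⟩ :=
    exists_monotone_eventually_isSummandWithin hmono hunion hstar' x
  have hg_top : ⨆ k, g k = ⊤ := iSup_eq_top_of_eventually_isSummandWithin hmono hunion hg_mono
    (fun k => (hg k).2) hx hxg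
  have hg_succ : ∀ k, ∃ d, g k ⊓ d = ⊥ ∧ g k ⊔ d = g (k + 1) := fun k => by
    obtain ⟨m, hk, hk1⟩ := ((hg k).2.and (hg (k + 1)).2).exists
    obtain ⟨-, d, -, hd⟩ := hk.of_le (hg_mono k.le_succ) hk1.1
    exact ⟨d, hd⟩
  obtain ⟨f, hf, hfg, hf_sup⟩ := exists_iSupIndep_of_complemented_succ hg_succ
  exact FinDecomp.of_iSupIndep f hf (hf_sup.trans hg_top) fun k =>
    (Submodule.rank_mono (hfg k)).trans_lt (hg k).1

/-- (Lemma cfd) A countable rank union of a chain of finitely decomposable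
modules, each RD in the next, satisfying condition (*), is finitely decomposable. -/
theorem finDecomp_of_chain [NoZeroSMulDivisors R M] (hMrank : Module.rank R M ≤ ℵ₀)
    (Mseq : ℕ → Submodule R M) (h0 : Mseq 0 = ⊥) (hmono : Monotone Mseq)
    (hunion : ⨆ n, Mseq n = ⊤)
    (hfd : ∀ n, FinDecomp R ↥(Mseq n))
    (hRD : ∀ n, IsRDWithin (Mseq n) (Mseq (n + 1)))
    (hstar : ∀ S : Finset M, ∃ (n : ℕ) (C : Submodule R M),
      ↑S ⊆ (C : Set M) ∧ Module.rank R ↥C < ℵ₀ ∧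
      ∀ m, n ≤ m → IsSummandWithin C (Mseq m)) :
    FinDecomp R M :=
  finDecomp_of_chain_general hMrank Mseq hmono hunion hstar
end
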